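/- In the influenced leader system on a strongly connected weighted directed graph with fixed leader set S0 ≠ ∅ and positive stubbornness values, the steady-state opinion of every vertex is monotone in the leader set S1: for all S1 ⊆ T1 ⊆ V ∖ S0 and every vertex v ∈ V, x̂(T1)_v ≥ x̂(S1)_v. -/

import Mathlib

/-!
Write `M_S = L + E^{S0 ∪ S} K` with `L = D - A`. Since `L 1 = 0` and the graph is strongly
connected with `S0 ≠ ∅`, `M_S` obeys a discrete minimum principle: `M_S z ≥ 0` forces `z ≥ 0`.
Comparing `M_S x̂(S) = E^S K 1` with `M_S 1 = E^{S0 ∪ S} K 1` gives `x̂(S) ≤ 1`, and then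
`M_T (x̂(T) - x̂(S)) = E^{T \ S} K (1 - x̂(S)) ≥ 0` gives `x̂(S) ≤ x̂(T)`.
-/

open Matrix

namespace Matrix

variable {ι : Type*} [Fintype ι] [DecidableEq ι]

def laplacian (A : Matrix ι ι ℝ) : Matrix ι ι ℝ :=
  diagonal (fun u => ∑ v, A u v) - A

theorem laplacian_add_diagonal_mulVec_apply (A : Matrix ι ι ℝ) (c z : ι → ℝ) (u : ι) :
    ((laplacian A + diagonal c) *ᵥ z) u = c u * z u + ∑ v, A u v * (z u - z v) := by
  rw [laplacian, add_mulVec, sub_mulVec, Pi.add_apply, Pi.sub_apply, mulVec_diagonal,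
    mulVec_diagonal]
  simp only [mulVec, dotProduct, mul_sub, Finset.sum_sub_distrib, Finset.sum_mul]
  ring

theorem laplacian_add_diagonal_mulVec_const_one (A : Matrix ι ι ℝ) (c : ι → ℝ) :
    (laplacian A + diagonal c) *ᵥ (fun _ => 1) = c := by
  ext u
  simp [laplacian_add_diagonal_mulVec_apply]

theorem diagonal_mul_one_sub_transpose_eq_laplacian {A : Matrix ι ι ℝ} {d : ι → ℝ}
    (hd : ∀ u, d u = ∑ v, A u v) (hd0 : ∀ u, d u ≠ 0) :
    diagonal d * (1 - (Aᵀ * diagonal (fun u => (d u)⁻¹))ᵀ) = laplacian A := by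
  have hdd : (fun u => d u * (d u)⁻¹) = fun _ => 1 := funext fun u => mul_inv_cancel₀ (hd0 u)
  rw [mul_sub, mul_one, transpose_mul, transpose_transpose, diagonal_transpose, ← mul_assoc,
    diagonal_mul_diagonal, hdd, diagonal_one, one_mul, laplacian, ← funext hd]

/-- A negative minimum of `z` would spread along the edges to `s`, where `c s > 0` forbids it. -/
theorem nonneg_of_laplacian_add_diagonal_mulVec_nonneg {A : Matrix ι ι ℝ}
    (hA : ∀ u v, 0 ≤ A u v) {c : ι → ℝ} (hc : 0 ≤ c) {s : ι} (hs : 0 < c s)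
    (hreach : ∀ u, Relation.ReflTransGen (fun a b => 0 < A a b) u s) {z : ι → ℝ}
    (hz : 0 ≤ (laplacian A + diagonal c) *ᵥ z) : 0 ≤ z := by
  have : Nonempty ι := ⟨s⟩
  obtain ⟨u₀, hmin⟩ := Finite.exists_min z
  intro w
  by_contra! hw
  have hu₀ : z u₀ < 0 := (hmin w).trans_lt hw
  have hspread : ∀ u, z u = z u₀ → c u = 0 ∧ ∀ v, 0 < A u v → z v = z u₀ := by
    intro u hu
    have hterm : ∀ v ∈ Finset.univ, A u v * (z u - z v) ≤ 0 := fun v _ =>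
      mul_nonpos_of_nonneg_of_nonpos (hA u v) (by linarith [hmin v])
    have hcz : c u * z u ≤ 0 := mul_nonpos_of_nonneg_of_nonpos (hc u) (by linarith)
    have hsum := Finset.sum_nonpos hterm
    have hzu := hz u
    rw [Pi.zero_apply, laplacian_add_diagonal_mulVec_apply] at hzu
    refine ⟨?_, fun v hv => ?_⟩
    · have : c u * z u = 0 := by linarith
      exact (mul_eq_zero.1 this).resolve_right (by linarith)
    · have hzero := (Finset.sum_eq_zero_iff_of_nonpos hterm).1 (by linarith) v
        (Finset.mem_univ v)
      have := (mul_eq_zero.1 hzero).resolve_left hv.ne'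
      linarith
  have hreach₀ : ∀ u, Relation.ReflTransGen (fun a b => 0 < A a b) u₀ u → z u = z u₀ := by
    intro u h
    induction h with
    | refl => rfl
    | tail _ hedge ih => exact (hspread _ ih).2 _ hedge
  exact hs.ne' (hspread s (hreach₀ s (hreach u₀))).1

theorem le_of_laplacian_add_diagonal_mulVec_le {A : Matrix ι ι ℝ}
    (hA : ∀ u v, 0 ≤ A u v) {c : ι → ℝ} (hc : 0 ≤ c) {s : ι} (hs : 0 < c s)
    (hreach : ∀ u, Relation.ReflTransGen (fun a b => 0 < A a b) u s) {x y : ι → ℝ}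
    (hxy : (laplacian A + diagonal c) *ᵥ x ≤ (laplacian A + diagonal c) *ᵥ y) : x ≤ y :=
  sub_nonneg.1 <| nonneg_of_laplacian_add_diagonal_mulVec_nonneg hA hc hs hreach <| by
    rwa [mulVec_sub, sub_nonneg]

end Matrix

theorem stmt10_general
    (n : ℕ)
    (A : Matrix (Fin n) (Fin n) ℝ)
    (hA : ∀ u v, 0 ≤ A u v)
    (hconn : ∀ u v : Fin n, Relation.ReflTransGen (fun a b => 0 < A a b) u v)
    (d : Fin n → ℝ) (hd : d = fun u => ∑ v, A u v) (hdpos : ∀ u, 0 < d u)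
    (W : Matrix (Fin n) (Fin n) ℝ)
    (hW : W = Aᵀ * Matrix.diagonal (fun u => (d u)⁻¹))
    (L : Matrix (Fin n) (Fin n) ℝ) (hL : L = Matrix.diagonal d * (1 - Wᵀ))
    (S0 : Finset (Fin n)) (hS0 : S0.Nonempty)
    -- stubbornness values:
    (κ : Fin n → ℝ) (hκ : ∀ v, 0 < κ v)
    -- for every admissible leader set `S1`, the matrix `L + E^{S0 ∪ S1} K` is
    -- invertible:
    (hinv : ∀ S1 : Finset (Fin n), S1 ⊆ S0ᶜ → IsUnit
      (L + Matrix.diagonal (fun v => if v ∈ S0 ∪ S1 then (1 : ℝ) else 0) *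
        Matrix.diagonal κ).det)
    -- `xhat S1 = (L + E^{S0 ∪ S1} K)⁻¹ E^{S1} K 1` is the steady-state opinion vector:
    (xhat : Finset (Fin n) → Fin n → ℝ)
    (hx : ∀ S1 : Finset (Fin n), xhat S1 =
      (L + Matrix.diagonal (fun v => if v ∈ S0 ∪ S1 then (1 : ℝ) else 0) *
        Matrix.diagonal κ)⁻¹.mulVec
        ((Matrix.diagonal (fun v => if v ∈ S1 then (1 : ℝ) else 0) *
          Matrix.diagonal κ).mulVec (fun _ => 1))) :
    ∀ S1 T1 : Finset (Fin n), S1 ⊆ T1 → T1 ⊆ S0ᶜ →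
      ∀ v : Fin n, xhat S1 v ≤ xhat T1 v := by
  intro S1 T1 hST hT
  obtain ⟨s, hs⟩ := hS0
  have hLap : L = laplacian A := by
    subst hW hL
    exact diagonal_mul_one_sub_transpose_eq_laplacian (by simp [hd]) fun u => (hdpos u).ne'
  have hE : ∀ S : Finset (Fin n), diagonal (fun v => if v ∈ S then (1 : ℝ) else 0) *
      diagonal κ = diagonal (fun v => if v ∈ S then κ v else 0) := fun S => by
    simp only [diagonal_mul_diagonal, ite_mul, one_mul, zero_mul]
  have hsteady : ∀ S ⊆ S0ᶜ, (laplacian A + diagonal (fun v => if v ∈ S0 ∪ S then κ v else 0)) *ᵥ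
      xhat S = fun v => if v ∈ S then κ v else 0 := by
    intro S hS
    rw [← hLap, ← hE, hx, mulVec_mulVec, mul_nonsing_inv _ (hinv S hS), one_mulVec, hE]
    ext v
    simp [mulVec_diagonal]
  have hcompare : ∀ S, ∀ x y : Fin n → ℝ,
      (laplacian A + diagonal (fun v => if v ∈ S0 ∪ S then κ v else 0)) *ᵥ x ≤
        (laplacian A + diagonal (fun v => if v ∈ S0 ∪ S then κ v else 0)) *ᵥ y → x ≤ y :=
    fun S x y => le_of_laplacian_add_diagonal_mulVec_le hA
      (fun v => ite_nonneg (hκ v).le le_rfl) (by simp [hs, hκ s]) (fun u => hconn u s)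
  have hS1 := hsteady S1 (hST.trans hT)
  have hle_one : xhat S1 ≤ fun _ => 1 := hcompare S1 _ _ <| by
    rw [hS1, laplacian_add_diagonal_mulVec_const_one]
    intro v
    by_cases hv : v ∈ S1
    · simp [hv]
    · simpa [hv] using ite_nonneg (hκ v).le le_rfl
  refine hcompare T1 _ _ ?_
  rw [hsteady T1 hT]
  intro v
  have hv := congrFun hS1 v
  rw [laplacian_add_diagonal_mulVec_apply] at hv ⊢
  suffices hgain : ((if v ∈ S0 ∪ T1 then κ v else 0) - if v ∈ S0 ∪ S1 then κ v else 0) * xhat S1 v ≤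
      (if v ∈ T1 then κ v else 0) - if v ∈ S1 then κ v else 0 by
    linarith
  by_cases hvS1 : v ∈ S1
  · simp [hvS1, hST hvS1]
  by_cases hvT1 : v ∈ T1
  · have hvS0 : v ∉ S0 := Finset.mem_compl.1 (hT hvT1)
    simpa [hvS0, hvS1, hvT1] using mul_le_of_le_one_right (hκ v).le (hle_one v)
  · simp [hvS1, hvT1]

/-- in the influenced leader system on a strongly connected weighted
directed graph with fixed leader set `S0 ≠ ∅` and positive stubbornness values, the
steady-state opinion of every vertex is monotone in the leader set `S1`: for
`S1 ⊆ T1 ⊆ V ∖ S0` and every vertex `v`, `x̂(T1)_v ≥ x̂(S1)_v`. -/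
theorem stmt10
    (n : ℕ) (hn : 2 ≤ n)
    (A : Matrix (Fin n) (Fin n) ℝ)
    (hA : ∀ u v, 0 ≤ A u v)
    (hconn : ∀ u v : Fin n, Relation.ReflTransGen (fun a b => 0 < A a b) u v)
    (d : Fin n → ℝ) (hd : d = fun u => ∑ v, A u v) (hdpos : ∀ u, 0 < d u)
    (W : Matrix (Fin n) (Fin n) ℝ)
    (hW : W = Aᵀ * Matrix.diagonal (fun u => (d u)⁻¹))
    (L : Matrix (Fin n) (Fin n) ℝ) (hL : L = Matrix.diagonal d * (1 - Wᵀ))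
    (S0 : Finset (Fin n)) (hS0 : S0.Nonempty)
    -- stubbornness values:
    (κ : Fin n → ℝ) (hκ : ∀ v, 0 < κ v)
    -- for every admissible leader set `S1`, the matrix `L + E^{S0 ∪ S1} K` is
    -- invertible:
    (hinv : ∀ S1 : Finset (Fin n), S1 ⊆ S0ᶜ → IsUnit
      (L + Matrix.diagonal (fun v => if v ∈ S0 ∪ S1 then (1 : ℝ) else 0) *
        Matrix.diagonal κ).det)
    -- `xhat S1 = (L + E^{S0 ∪ S1} K)⁻¹ E^{S1} K 1` is the steady-state opinion vector:
    (xhat : Finset (Fin n) → Fin n → ℝ)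
    (hx : ∀ S1 : Finset (Fin n), xhat S1 =
      (L + Matrix.diagonal (fun v => if v ∈ S0 ∪ S1 then (1 : ℝ) else 0) *
        Matrix.diagonal κ)⁻¹.mulVec
        ((Matrix.diagonal (fun v => if v ∈ S1 then (1 : ℝ) else 0) *
          Matrix.diagonal κ).mulVec (fun _ => 1))) :
    ∀ S1 T1 : Finset (Fin n), S1 ⊆ T1 → T1 ⊆ S0ᶜ →
      ∀ v : Fin n, xhat S1 v ≤ xhat T1 v :=
  stmt10_general n A hA hconn d hd hdpos W hW L hL S0 hS0 κ hκ hinv xhat hx
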